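/- arXiv:2110.12095 — 3 statements merged into one kernel-verified Lean document; each statement's English description precedes it below -/
import Mathlib

section
/- For all positive integers t and m, the identity C_t(2m+1, t(m+1)) − C_t(2m+1, t(m+1)+1) = C_t(2m+2, t(m+1)) − C_t(2m+2, t(m+1)+1) holds, where C_s(n, k) denotes the s-binomial coefficient. -/
/-!
Multiplying by `1 + x + ⋯ + x^t` gives `C_t(n+1, k) = ∑_{i ≤ t} C_t(n, k - i)` for `k ≥ t`, so the
difference `C_t(n+1, k) - C_t(n+1, k+1)` telescopes to `C_t(n, k - t) - C_t(n, k+1)`. For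
`n = 2m+1` and `k = t(m+1)` the palindromic symmetry `C_t(n, j) = C_t(n, tn - j)` turns
`C_t(n, k - t) = C_t(n, tm)` into `C_t(n, k)`.
-/

open Polynomial Finset

/-- The s-binomial coefficient: coefficient of x^k in (1 + x + ... + x^s)^n. -/
noncomputable def sBinom (s n k : ℕ) : ℕ :=
  (((∑ i ∈ Finset.range (s + 1), (Polynomial.X : Polynomial ℕ) ^ i)) ^ n).coeff k

namespace Polynomial

variable {R : Type*} [Semiring R]

theorem reverse_pow_of_domain [NoZeroDivisors R] (f : R[X]) (n : ℕ) :
    (f ^ n).reverse = f.reverse ^ n := by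
  induction n with
  | zero => simpa using reverse_C (1 : R)
  | succ n ih => rw [pow_succ, reverse_mul_of_domain, ih, pow_succ]

theorem coeff_eq_coeff_natDegree_sub_of_reverse_eq {f : R[X]} (hf : f.reverse = f) {k : ℕ}
    (hk : k ≤ f.natDegree) : f.coeff k = f.coeff (f.natDegree - k) := by
  conv_lhs => rw [← hf, coeff_reverse, revAt_le hk]

theorem natDegree_geom_sum_X [Nontrivial R] (s : ℕ) :
    (∑ i ∈ range (s + 1), (X : R[X]) ^ i).natDegree = s := by
  refine le_antisymm (natDegree_le_iff_coeff_eq_zero.mpr fun j hj => ?_)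
    (le_natDegree_of_ne_zero ?_)
  · simp [not_le.mpr hj]
  · simp

theorem reverse_geom_sum_X (s : ℕ) :
    (∑ i ∈ range (s + 1), (X : R[X]) ^ i).reverse = ∑ i ∈ range (s + 1), (X : R[X]) ^ i := by
  nontriviality R
  ext j
  rw [coeff_reverse, natDegree_geom_sum_X]
  rcases le_or_gt j s with hj | hj
  · simp [revAt_le hj, hj]
  · rw [revAt_eq_self_of_lt hj]

end Polynomial

theorem sBinom_eq_sBinom_sub {s n k : ℕ} (hk : k ≤ s * n) :
    sBinom s n k = sBinom s n (s * n - k) := by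
  let p : ℕ[X] := (∑ i ∈ range (s + 1), X ^ i) ^ n
  have hdeg : p.natDegree = s * n := by
    rw [(monic_geom_sum_X s.succ_ne_zero).natDegree_pow, natDegree_geom_sum_X, mul_comm]
  have hpal : p.reverse = p := by
    rw [reverse_pow_of_domain, reverse_geom_sum_X]
  have := coeff_eq_coeff_natDegree_sub_of_reverse_eq hpal (hdeg ▸ hk)
  rwa [hdeg] at this

theorem sBinom_succ {s n k : ℕ} (hk : s ≤ k) :
    sBinom s (n + 1) k = ∑ i ∈ range (s + 1), sBinom s n (k - i) := by
  rw [sBinom, pow_succ, mul_sum, finsetSum_coeff]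
  refine sum_congr rfl fun i hi => ?_
  rw [coeff_mul_X_pow', if_pos ((Nat.lt_succ_iff.mp (mem_range.mp hi)).trans hk), sBinom]

theorem sBinom_succ_sub_sBinom_succ {s n k : ℕ} (hk : s ≤ k) :
    (sBinom s (n + 1) k : ℤ) - sBinom s (n + 1) (k + 1) =
      sBinom s n (k - s) - sBinom s n (k + 1) := by
  rw [sBinom_succ hk, sBinom_succ (hk.trans (k.le_add_right 1))]
  push_cast
  have htelescope := sum_range_sub (fun i => (sBinom s n (k + 1 - i) : ℤ)) (s + 1)
  simp only [Nat.add_sub_add_right, Nat.sub_zero] at htelescope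
  rw [← sum_sub_distrib, htelescope]

theorem stmt4_general (t m : ℕ) :
    (sBinom t (2 * m + 1) (t * (m + 1)) : ℤ) - sBinom t (2 * m + 1) (t * (m + 1) + 1) =
      (sBinom t (2 * m + 2) (t * (m + 1)) : ℤ) - sBinom t (2 * m + 2) (t * (m + 1) + 1) := by
  have hsymm : sBinom t (2 * m + 1) (t * (m + 1) - t) = sBinom t (2 * m + 1) (t * (m + 1)) := by
    have hk : t * (m + 1) - t = t * m := by rw [mul_add_one, Nat.add_sub_cancel]
    have hdual : t * (2 * m + 1) - t * m = t * (m + 1) := by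
      rw [← Nat.mul_sub]; congr 1; omega
    rw [hk, sBinom_eq_sBinom_sub (Nat.mul_le_mul_left t (by omega)), hdual]
  rw [show 2 * m + 2 = 2 * m + 1 + 1 from rfl, sBinom_succ_sub_sBinom_succ (n := 2 * m + 1)
    (Nat.le_mul_of_pos_right t m.add_one_pos), hsymm]

theorem stmt4 (t m : ℕ) (ht : 0 < t) (hm : 0 < m) :
    (sBinom t (2 * m + 1) (t * (m + 1)) : ℤ) - sBinom t (2 * m + 1) (t * (m + 1) + 1) =
      (sBinom t (2 * m + 2) (t * (m + 1)) : ℤ) - sBinom t (2 * m + 2) (t * (m + 1) + 1) :=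
  stmt4_general t m
end

section
/- For all positive integers n and s, the n-th s-Catalan number C_s(2n, sn) − C_s(2n, sn+1) is nonnegative; equivalently, C_s(2n, sn) ≥ C_s(2n, sn+1). -/
open Polynomial Finset

private noncomputable def pp (s : ℕ) : Polynomial ℕ :=
  ∑ i ∈ Finset.range (s + 1), (Polynomial.X : Polynomial ℕ) ^ i

private lemma pp_coeff (s k : ℕ) : (pp s).coeff k = if k ≤ s then 1 else 0 := by
  unfold pp
  rw [Polynomial.finset_sum_coeff]
  simp [Polynomial.coeff_X_pow, Nat.lt_succ_iff, eq_comm]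

private lemma pp_natDegree_le (s : ℕ) : (pp s).natDegree ≤ s := by
  refine Polynomial.natDegree_le_iff_coeff_eq_zero.mpr fun k hk => ?_
  rw [pp_coeff, if_neg (by omega)]

private lemma reflect_pp (s : ℕ) : (pp s).reflect s = pp s := by
  ext k
  rw [Polynomial.coeff_reflect, pp_coeff, pp_coeff]
  rcases le_or_gt k s with h | h
  · rw [Polynomial.revAt_le h, if_pos h, if_pos (Nat.sub_le _ _)]
  · rw [Polynomial.revAt_eq_self_of_lt h]

private lemma pow_deg_le (s n : ℕ) : ((pp s) ^ n).natDegree ≤ s * n := by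
  have h1 := Polynomial.natDegree_pow_le (p := pp s) (n := n)
  have h2 := pp_natDegree_le s
  nlinarith

private lemma reflect_pp_pow (s : ℕ) : ∀ n, ((pp s) ^ n).reflect (s * n) = (pp s) ^ n := by
  intro n
  induction n with
  | zero => simp [Polynomial.reflect_one]
  | succ k ih =>
    rw [pow_succ, show s * (k + 1) = s * k + s by ring,
      Polynomial.reflect_mul _ _ (pow_deg_le s k) (pp_natDegree_le s), ih, reflect_pp]

private lemma pp_symm (s n i : ℕ) (h : i ≤ s * n) :
    ((pp s) ^ n).coeff (s * n - i) = ((pp s) ^ n).coeff i := by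
  conv_rhs => rw [← reflect_pp_pow s n]
  rw [Polynomial.coeff_reflect, Polynomial.revAt_le h]

private lemma pp_vanish (s n k : ℕ) (h : s * n < k) : ((pp s) ^ n).coeff k = 0 :=
  Polynomial.coeff_eq_zero_of_natDegree_lt (lt_of_le_of_lt (pow_deg_le s n) h)

theorem stmt5 (n s : ℕ) (hn : 0 < n) (hs : 0 < s) :
    sBinom s (2 * n) (s * n + 1) ≤ sBinom s (2 * n) (s * n) := by
  have hpow : (pp s) ^ (2 * n) = (pp s) ^ n * (pp s) ^ n := by
    rw [two_mul, pow_add]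
  have hcoeff : ∀ k, sBinom s (2 * n) k
      = ∑ i ∈ Finset.range (k + 1), ((pp s) ^ n).coeff i * ((pp s) ^ n).coeff (k - i) := by
    intro k
    rw [show sBinom s (2 * n) k = ((pp s) ^ (2 * n)).coeff k from rfl, hpow,
      Polynomial.coeff_mul, Finset.Nat.sum_antidiagonal_eq_sum_range_succ_mk]
  have hc0 : sBinom s (2 * n) (s * n)
      = ∑ i ∈ Finset.range (s * n + 1), ((pp s) ^ n).coeff i * ((pp s) ^ n).coeff i := by
    rw [hcoeff]
    refine Finset.sum_congr rfl fun i hi => ?_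
    rw [pp_symm s n i (Nat.lt_succ_iff.mp (Finset.mem_range.mp hi))]
  set a : ℕ → ℕ := fun i => ((pp s) ^ n).coeff i with ha
  have key : 2 * sBinom s (2 * n) (s * n + 1) ≤ 2 * sBinom s (2 * n) (s * n) := by
    rw [hcoeff (s * n + 1), hc0]
    have h2 : ∑ i ∈ Finset.range (s * n + 1 + 1), a (s * n + 1 - i) * a (s * n + 1 - i)
        = ∑ i ∈ Finset.range (s * n + 1 + 1), a i * a i := by
      rw [← Finset.sum_range_reflect (fun i => a i * a i) (s * n + 1 + 1)]
      refine Finset.sum_congr rfl fun i hi => ?_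
      have : s * n + 1 + 1 - 1 - i = s * n + 1 - i := by omega
      simp only [this]
    have h3 : a (s * n + 1) = 0 := pp_vanish s n (s * n + 1) (Nat.lt_succ_self _)
    calc 2 * ∑ i ∈ Finset.range (s * n + 1 + 1), a i * a (s * n + 1 - i)
        = ∑ i ∈ Finset.range (s * n + 1 + 1), 2 * (a i * a (s * n + 1 - i)) :=
          Finset.mul_sum _ _ _
      _ ≤ ∑ i ∈ Finset.range (s * n + 1 + 1),
            (a i * a i + a (s * n + 1 - i) * a (s * n + 1 - i)) := by
          refine Finset.sum_le_sum fun i _ => ?_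
          zify
          nlinarith [sq_nonneg ((a i : ℤ) - a (s * n + 1 - i))]
      _ = ∑ i ∈ Finset.range (s * n + 1 + 1), a i * a i
          + ∑ i ∈ Finset.range (s * n + 1 + 1), a (s * n + 1 - i) * a (s * n + 1 - i) :=
          Finset.sum_add_distrib
      _ = 2 * ∑ i ∈ Finset.range (s * n + 1 + 1), a i * a i := by rw [h2]; ring
      _ = 2 * (∑ i ∈ Finset.range (s * n + 1), a i * a i + a (s * n + 1) * a (s * n + 1)) := by
          rw [Finset.sum_range_succ]
      _ = 2 * ∑ i ∈ Finset.range (s * n + 1), a i * a i := by rw [h3]; ring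
  omega
end

section
/- For every positive integer s, the second s-Catalan number (n = 2 case) equals s + 1: C_s(4, 2s) − C_s(4, 2s+1) = s + 1. -/
open Polynomial Finset

/-- coefficient of the base polynomial squared -/
def c2 (s j : ℕ) : ℕ := min j s + 1 - (j - s)

lemma coeff_P (s k : ℕ) :
    (∑ i ∈ Finset.range (s + 1), (Polynomial.X : Polynomial ℕ) ^ i).coeff k
      = if k ≤ s then 1 else 0 := by
  rw [Polynomial.finset_sum_coeff]
  simp [Polynomial.coeff_X_pow, Nat.lt_succ_iff]

lemma coeff_P2 (s j : ℕ) :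
    ((∑ i ∈ Finset.range (s + 1), (Polynomial.X : Polynomial ℕ) ^ i) ^ 2).coeff j
      = c2 s j := by
  rw [sq, Polynomial.coeff_mul, Finset.Nat.sum_antidiagonal_eq_sum_range_succ_mk]
  simp only [coeff_P]
  have h : ∀ a ∈ Finset.range (j + 1),
      (if a ≤ s then 1 else 0) * (if j - a ≤ s then 1 else 0)
        = if a ∈ Finset.Icc (j - s) (min j s) then 1 else 0 := by
    intro a ha
    simp only [Finset.mem_range] at ha
    have hm : a ∈ Finset.Icc (j - s) (min j s) ↔ (a ≤ s ∧ j - a ≤ s) := by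
      simp only [Finset.mem_Icc, le_min_iff]
      omega
    simp only [hm, ite_and]
    by_cases h1 : a ≤ s <;> by_cases h2 : j - a ≤ s <;> simp [h1, h2]
  rw [Finset.sum_congr rfl h, Finset.sum_ite_mem, Finset.sum_const, smul_eq_mul, mul_one]
  have hsub : Finset.Icc (j - s) (min j s) ⊆ Finset.range (j + 1) := by
    intro a ha
    simp only [Finset.mem_Icc] at ha
    simp only [Finset.mem_range]
    omega
  rw [Finset.inter_eq_right.mpr hsub, Nat.card_Icc]
  unfold c2
  omega

lemma coeff_P4 (s k : ℕ) :
    sBinom s 4 k = ∑ j ∈ Finset.range (k + 1), c2 s j * c2 s (k - j) := by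
  unfold sBinom
  have h4 : (∑ i ∈ Finset.range (s + 1), (Polynomial.X : Polynomial ℕ) ^ i) ^ 4
      = ((∑ i ∈ Finset.range (s + 1), (Polynomial.X : Polynomial ℕ) ^ i) ^ 2)
        * ((∑ i ∈ Finset.range (s + 1), (Polynomial.X : Polynomial ℕ) ^ i) ^ 2) := by
    ring
  rw [h4, Polynomial.coeff_mul, Finset.Nat.sum_antidiagonal_eq_sum_range_succ_mk]
  simp only [coeff_P2]

lemma A_eq (s : ℕ) :
    ∑ j ∈ Finset.range (2 * s + 1), c2 s j * c2 s (2 * s - j)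
      = 2 * (∑ j ∈ Finset.range s, (j + 1) ^ 2) + (s + 1) ^ 2 := by
  conv_lhs => rw [Finset.range_eq_Ico]
  rw [← Finset.sum_Ico_consecutive _ (Nat.zero_le (s + 1)) (by omega : s + 1 ≤ 2 * s + 1)]
  have h1 : ∑ j ∈ Finset.Ico 0 (s + 1), c2 s j * c2 s (2 * s - j)
      = (∑ j ∈ Finset.range s, (j + 1) ^ 2) + (s + 1) ^ 2 := by
    rw [← Finset.range_eq_Ico]
    have : ∀ j ∈ Finset.range (s + 1), c2 s j * c2 s (2 * s - j) = (j + 1) ^ 2 := by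
      intro j hj
      simp only [Finset.mem_range] at hj
      have e1 : c2 s j = j + 1 := by unfold c2; omega
      have e2 : c2 s (2 * s - j) = j + 1 := by unfold c2; omega
      rw [e1, e2, sq]
    rw [Finset.sum_congr rfl this, Finset.sum_range_succ]
  have h2 : ∑ j ∈ Finset.Ico (s + 1) (2 * s + 1), c2 s j * c2 s (2 * s - j)
      = ∑ j ∈ Finset.range s, (j + 1) ^ 2 := by
    rw [Finset.sum_Ico_eq_sum_range]
    have hlen : 2 * s + 1 - (s + 1) = s := by omega
    rw [hlen]
    rw [← Finset.sum_range_reflect (fun j => (j + 1) ^ 2) s]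
    apply Finset.sum_congr rfl
    intro i hi
    simp only [Finset.mem_range] at hi
    have e1 : c2 s (s + 1 + i) = s - i := by unfold c2; omega
    have e2 : c2 s (2 * s - (s + 1 + i)) = s - i := by unfold c2; omega
    have e3 : s - 1 - i + 1 = s - i := by omega
    rw [e1, e2, e3, sq]
  rw [h1, h2]
  ring

lemma B_eq (s : ℕ) :
    ∑ j ∈ Finset.range (2 * s + 1 + 1), c2 s j * c2 s (2 * s + 1 - j)
      = 2 * (∑ j ∈ Finset.range (s + 1), j * (j + 1)) := by
  conv_lhs => rw [Finset.range_eq_Ico]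
  rw [← Finset.sum_Ico_consecutive _ (Nat.zero_le (s + 1)) (by omega : s + 1 ≤ 2 * s + 1 + 1)]
  have h1 : ∑ j ∈ Finset.Ico 0 (s + 1), c2 s j * c2 s (2 * s + 1 - j)
      = ∑ j ∈ Finset.range (s + 1), j * (j + 1) := by
    rw [← Finset.range_eq_Ico]
    apply Finset.sum_congr rfl
    intro j hj
    simp only [Finset.mem_range] at hj
    have e1 : c2 s j = j + 1 := by unfold c2; omega
    have e2 : c2 s (2 * s + 1 - j) = j := by unfold c2; omega
    rw [e1, e2]
    ring
  have h2 : ∑ j ∈ Finset.Ico (s + 1) (2 * s + 1 + 1), c2 s j * c2 s (2 * s + 1 - j)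
      = ∑ j ∈ Finset.range (s + 1), j * (j + 1) := by
    rw [Finset.sum_Ico_eq_sum_range]
    have hlen : 2 * s + 1 + 1 - (s + 1) = s + 1 := by omega
    rw [hlen]
    rw [← Finset.sum_range_reflect (fun j => j * (j + 1)) (s + 1)]
    apply Finset.sum_congr rfl
    intro i hi
    simp only [Finset.mem_range] at hi
    have e1 : c2 s (s + 1 + i) = s - i := by unfold c2; omega
    have e2 : c2 s (2 * s + 1 - (s + 1 + i)) = s - i + 1 := by unfold c2; omega
    have e3 : s + 1 - 1 - i = s - i := by omega
    rw [e1, e2, e3]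
  rw [h1, h2]
  ring

lemma key (s : ℕ) :
    2 * (∑ j ∈ Finset.range s, ((j : ℤ) + 1) ^ 2) + ((s : ℤ) + 1) ^ 2
      - 2 * (∑ j ∈ Finset.range (s + 1), (j : ℤ) * ((j : ℤ) + 1)) = (s : ℤ) + 1 := by
  induction s with
  | zero => simp
  | succ n ih =>
    rw [Finset.sum_range_succ, Finset.sum_range_succ (fun j => (j : ℤ) * ((j : ℤ) + 1))]
    push_cast
    push_cast at ih
    linear_combination ih

theorem stmt12 (s : ℕ) (hs : 0 < s) :
    (sBinom s 4 (2 * s) : ℤ) - sBinom s 4 (2 * s + 1) = (s : ℤ) + 1 := by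
  rw [coeff_P4, coeff_P4, A_eq, B_eq]
  push_cast
  linear_combination key s
end
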